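/- Let G be a finite simple connected graph that contains an induced subgraph isomorphic to the claw K_{1,3}. Then there exists a set D of vertices of G with |D| ≤ 2α(G) − 2 such that h(G) ≥ h(G − D) + 1, where G − D is the induced subgraph on V(G) \ D. -/

import Mathlib

/-!
Grow a connected vertex set `D` together with a stable set `I ⊆ D` while keeping
`|D| + 2 ≤ 2|I|`, starting from the claw (four vertices, three pairwise nonadjacent leaves).
As long as `D` is not dominating, a path leaving the closed neighbourhood of `D` crosses its
boundary along an edge `wu` with `w` adjacent to `D` and `u` adjacent to nothing in `D`;
adding `w` and `u` to `D` and `u` to `I` preserves the invariant. A connected dominating `D`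
can serve as one more branch set next to any complete minor of `G - D`, and
`|D| ≤ 2|I| - 2 ≤ 2α(G) - 2`.
-/

/-- A set of vertices is a stable (independent) set if its vertices are pairwise nonadjacent. -/
def SimpleGraph.IsStableSet {V : Type*} (G : SimpleGraph V) (s : Finset V) : Prop :=
  ∀ u ∈ s, ∀ v ∈ s, ¬ G.Adj u v

/-- The stability (independence) number of a graph: the size of a largest stable set. -/
noncomputable def SimpleGraph.stabilityNumber {V : Type*} (G : SimpleGraph V) : ℕ :=
  sSup {n | ∃ s : Finset V, G.IsStableSet s ∧ s.card = n}

/-- `G` has a complete minor of order `k`: there are `k` pairwise disjoint nonempty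
vertex sets (branch sets), each inducing a connected subgraph, with an edge of `G`
between any two of them.  Contracting each branch set yields `K_k`. -/
def SimpleGraph.HasCompleteMinor {V : Type*} (G : SimpleGraph V) (k : ℕ) : Prop :=
  ∃ B : Fin k → Set V,
    (∀ i, (B i).Nonempty) ∧
    (∀ i, (G.induce (B i)).Connected) ∧
    (Pairwise fun i j => Disjoint (B i) (B j)) ∧
    (∀ i j, i ≠ j → ∃ u ∈ B i, ∃ v ∈ B j, G.Adj u v)

/-- The Hadwiger number of `G`: the largest `k` such that `K_k` is a minor of `G`. -/
noncomputable def SimpleGraph.hadwigerNumber {V : Type*} (G : SimpleGraph V) : ℕ :=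
  sSup {k | G.HasCompleteMinor k}

open Finset

namespace SimpleGraph

variable {V : Type*}

def IsDominating (G : SimpleGraph V) (s : Set V) : Prop :=
  ∀ v ∉ s, ∃ u ∈ s, G.Adj u v

/-- `G.HasCompleteMinor k` unfolds to `∃ B, G.IsCompleteMinorModel B`. -/
def IsCompleteMinorModel (G : SimpleGraph V) {k : ℕ} (B : Fin k → Set V) : Prop :=
  (∀ i, (B i).Nonempty) ∧
    (∀ i, (G.induce (B i)).Connected) ∧
    (Pairwise fun i j => Disjoint (B i) (B j)) ∧
    (∀ i j, i ≠ j → ∃ u ∈ B i, ∃ v ∈ B j, G.Adj u v)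

section Hadwiger

variable (G : SimpleGraph V)

lemma hasCompleteMinor_zero : G.HasCompleteMinor 0 :=
  ⟨Fin.elim0, Fin.rec0, Fin.rec0, Fin.rec0, Fin.rec0⟩

lemma bddAbove_setOf_hasCompleteMinor [Finite V] : BddAbove {k | G.HasCompleteMinor k} := by
  refine ⟨Nat.card V, ?_⟩
  rintro k ⟨B, hne, -, hdisj, -⟩
  choose g hg using hne
  have hg_inj : Function.Injective g := fun i j hij => by
    by_contra hne
    exact Set.disjoint_left.mp (hdisj hne) (hg i) (hij ▸ hg j)
  simpa using Nat.card_le_card_of_injective g hg_inj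

lemma hasCompleteMinor_hadwigerNumber [Finite V] : G.HasCompleteMinor G.hadwigerNumber :=
  Nat.sSup_mem ⟨0, G.hasCompleteMinor_zero⟩ G.bddAbove_setOf_hasCompleteMinor

variable {G}

lemma HasCompleteMinor.le_hadwigerNumber [Finite V] {k : ℕ} (h : G.HasCompleteMinor k) :
    k ≤ G.hadwigerNumber :=
  le_csSup G.bddAbove_setOf_hasCompleteMinor h

lemma Connected.induce_image_val {s : Set V} {t : Set s}
    (h : ((G.induce s).induce t).Connected) : (G.induce (Subtype.val '' t)).Connected :=
  h.map ⟨fun x => ⟨x.1, x.1, x.2, rfl⟩, id⟩ (by rintro ⟨_, x, hx, rfl⟩; exact ⟨⟨x, hx⟩, rfl⟩)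

namespace IsCompleteMinorModel

lemma image_val {s : Set V} {k : ℕ} {B : Fin k → Set s}
    (hB : (G.induce s).IsCompleteMinorModel B) :
    G.IsCompleteMinorModel fun i => Subtype.val '' B i := by
  obtain ⟨hne, hconn, hdisj, hadj⟩ := hB
  refine ⟨fun i => (hne i).image _, fun i => (hconn i).induce_image_val,
    fun i j hij => (Set.disjoint_image_iff Subtype.val_injective).mpr (hdisj hij),
    fun i j hij => ?_⟩
  obtain ⟨u, hu, v, hv, huv⟩ := hadj i j hij
  exact ⟨u, ⟨u, hu, rfl⟩, v, ⟨v, hv, rfl⟩, huv⟩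

lemma cons {k : ℕ} {B : Fin k → Set V} {s : Set V} (hB : G.IsCompleteMinorModel B)
    (hs : (G.induce s).Connected) (hdisj : ∀ i, Disjoint s (B i))
    (hadj : ∀ i, ∃ u ∈ s, ∃ v ∈ B i, G.Adj u v) :
    G.IsCompleteMinorModel (Fin.cons s B : Fin (k + 1) → Set V) := by
  obtain ⟨hBne, hBconn, hBdisj, hBadj⟩ := hB
  refine ⟨Fin.cases (Set.nonempty_coe_sort.mp hs.nonempty) hBne, Fin.cases hs hBconn, ?_, ?_⟩
  · exact pairwise_fin_succ_iff.mpr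
      ⟨fun i => (hdisj i).symm, hdisj, fun i j hij => hBdisj hij⟩
  · refine Fin.cases (Fin.cases (absurd rfl) fun j _ => hadj j) fun i => Fin.cases (fun _ => ?_)
      fun j hij => hBadj i j (ne_of_apply_ne Fin.succ hij)
    obtain ⟨u, hu, v, hv, huv⟩ := hadj i
    exact ⟨v, hv, u, hu, huv.symm⟩

end IsCompleteMinorModel

variable (G)

lemma hadwigerNumber_induce_compl_add_one_le [Finite V] {s : Set V}
    (hs : (G.induce s).Connected) (hdom : G.IsDominating s) :
    (G.induce sᶜ).hadwigerNumber + 1 ≤ G.hadwigerNumber := by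
  obtain ⟨B, hB⟩ := (G.induce sᶜ).hasCompleteMinor_hadwigerNumber
  refine HasCompleteMinor.le_hadwigerNumber
    ⟨_, (IsCompleteMinorModel.image_val hB).cons hs (fun i => ?_) fun i => ?_⟩
  · exact Set.disjoint_left.mpr fun v hv ⟨x, _, hx⟩ => x.2 (hx ▸ hv)
  · obtain ⟨x, hx⟩ := hB.1 i
    obtain ⟨u, hu, hux⟩ := hdom x x.2
    exact ⟨u, hu, x, ⟨x, hx, rfl⟩, hux⟩

end Hadwiger

section Growth

variable {G : SimpleGraph V}

lemma IsStableSet.card_le_stabilityNumber [Finite V] {s : Finset V} (hs : G.IsStableSet s) :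
    s.card ≤ G.stabilityNumber := by
  have := Fintype.ofFinite V
  refine le_csSup ⟨Fintype.card V, ?_⟩ ⟨s, hs, rfl⟩
  rintro n ⟨t, -, rfl⟩
  exact t.card_le_univ

lemma IsStableSet.insert [DecidableEq V] {s : Finset V} {u : V} (hs : G.IsStableSet s)
    (hu : ∀ v ∈ s, ¬ G.Adj v u) : G.IsStableSet (insert u s) := by
  simp only [IsStableSet, mem_insert, forall_eq_or_imp, G.irrefl, not_false_eq_true, true_and]
  exact ⟨fun v hv huv => hu v hv huv.symm, fun v hv => ⟨hu v hv, hs v hv⟩⟩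

def IsStableHeavyConnected (G : SimpleGraph V) (D : Finset V) : Prop :=
  (G.induce (D : Set V)).Connected ∧ ∃ I ⊆ D, G.IsStableSet I ∧ D.card + 2 ≤ 2 * I.card

lemma IsStableHeavyConnected.card_le [Finite V] {D : Finset V}
    (h : G.IsStableHeavyConnected D) : D.card ≤ 2 * G.stabilityNumber - 2 := by
  obtain ⟨-, I, -, hI, hcard⟩ := h
  have := hI.card_le_stabilityNumber
  omega

lemma IsStableHeavyConnected.insert_insert [DecidableEq V] {D : Finset V} {w u : V}
    (h : G.IsStableHeavyConnected D) (hw : w ∉ D) (hu : u ∉ D) (hDw : ∃ y ∈ D, G.Adj y w)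
    (hwu : G.Adj w u) (hDu : ∀ y ∈ D, ¬ G.Adj y u) :
    G.IsStableHeavyConnected (insert u (insert w D)) := by
  obtain ⟨hconn, I, hID, hI, hcard⟩ := h
  obtain ⟨y, hy, hyw⟩ := hDw
  have hcoe : ((insert u (insert w D) : Finset V) : Set V) = (D : Set V) ∪ {w, u} := by
    ext; simp only [coe_insert, Set.mem_insert_iff, mem_coe, Set.mem_union]; tauto
  refine ⟨hcoe ▸ connected_induce_union hconn.preconnected
      (induce_pair_connected_of_adj hwu).preconnected hy (Set.mem_insert w _) hyw,
    insert u I, insert_subset_insert _ (hID.trans (subset_insert _ _)),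
    hI.insert fun v hv => hDu v (hID hv), ?_⟩
  rw [card_insert_of_notMem (by simp [hu, hwu.ne.symm]), card_insert_of_notMem hw,
    card_insert_of_notMem fun h => hu (hID h)]
  omega

lemma exists_adj_adj_of_not_isDominating (hG : G.Connected) {s : Set V} (hs : s.Nonempty)
    (hdom : ¬ G.IsDominating s) :
    ∃ w u, w ∉ s ∧ u ∉ s ∧ (∃ y ∈ s, G.Adj y w) ∧ G.Adj w u ∧ ∀ y ∈ s, ¬ G.Adj y u := by
  simp only [IsDominating, not_forall, not_exists, not_and] at hdom
  obtain ⟨v, hv, hvs⟩ := hdom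
  obtain ⟨d, hd⟩ := hs
  let N : Set V := {x | x ∈ s ∨ ∃ y ∈ s, G.Adj y x}
  obtain ⟨p⟩ := hG.preconnected d v
  obtain ⟨e, -, he, he'⟩ := p.exists_boundary_dart N (Or.inl hd)
    fun h => h.elim hv fun ⟨y, hy, hyv⟩ => hvs y hy hyv
  simp only [N, Set.mem_ofPred_eq, not_or, not_exists, not_and] at he he'
  have hw : e.fst ∉ s := fun h => he'.2 _ h e.adj
  exact ⟨e.fst, e.snd, hw, he'.1, he.resolve_left hw, e.adj, he'.2⟩

lemma IsStableHeavyConnected.exists_isDominating [Finite V] (hG : G.Connected) {D : Finset V}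
    (h : G.IsStableHeavyConnected D) :
    ∃ D' : Finset V, G.IsStableHeavyConnected D' ∧ G.IsDominating D' := by
  classical
  have := Fintype.ofFinite V
  obtain ⟨D', hD', hmax⟩ :=
    exists_max_image (univ.filter G.IsStableHeavyConnected) card ⟨D, by simpa using h⟩
  rw [mem_filter] at hD'
  refine ⟨D', hD'.2, by_contra fun hdom => ?_⟩
  have hne : (D' : Set V).Nonempty := Set.nonempty_coe_sort.mp hD'.2.1.nonempty
  obtain ⟨w, u, hw, hu, hDw, hwu, hDu⟩ := exists_adj_adj_of_not_isDominating hG hne hdom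
  simp only [mem_coe] at hw hu hDw hDu
  have hbig := hmax _ (mem_filter.mpr ⟨mem_univ _, hD'.2.insert_insert hw hu hDw hwu hDu⟩)
  rw [card_insert_of_notMem (by simp [hu, hwu.ne.symm]), card_insert_of_notMem hw] at hbig
  omega

lemma completeBipartiteGraph_connected {α β : Type*} [Nonempty α] [Nonempty β] :
    (completeBipartiteGraph α β).Connected := by
  obtain ⟨a⟩ := ‹Nonempty α›
  obtain ⟨b⟩ := ‹Nonempty β›
  refine connected_iff_exists_forall_reachable _ |>.mpr ⟨.inr b, ?_⟩
  rintro (a' | b')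
  · exact Adj.reachable (by simp)
  · exact (Adj.reachable (by simp : (completeBipartiteGraph α β).Adj (.inr b) (.inl a))).trans
      (Adj.reachable (by simp))

lemma exists_isStableHeavyConnected_of_star {m : ℕ} (hm : 3 ≤ m)
    (f : completeBipartiteGraph (Fin 1) (Fin m) ↪g G) :
    ∃ D : Finset V, G.IsStableHeavyConnected D := by
  have : NeZero m := ⟨by omega⟩
  refine ⟨univ.map f.toEmbedding, ?_, (univ.map .inr).map f.toEmbedding,
    map_subset_map.mpr (subset_univ _), by simp [IsStableSet], ?_⟩
  · rw [coe_map, coe_univ, Set.image_univ]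
    exact f.isoInduceRange.connected_iff.mp completeBipartiteGraph_connected
  · simp only [card_map, card_univ, Fintype.card_sum, Fintype.card_unique, Fintype.card_fin]
    omega

end Growth

end SimpleGraph

theorem exists_deletion_set_of_claw_general {V : Type*} [Fintype V]
    (G : SimpleGraph V) (hconn : G.Connected)
    (hclaw : Nonempty (completeBipartiteGraph (Fin 1) (Fin 3) ↪g G)) :
    ∃ D : Finset V, D.card ≤ 2 * G.stabilityNumber - 2 ∧
      (G.induce ((D : Set V)ᶜ)).hadwigerNumber + 1 ≤ G.hadwigerNumber := by
  obtain ⟨f⟩ := hclaw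
  obtain ⟨D₀, hD₀⟩ := SimpleGraph.exists_isStableHeavyConnected_of_star le_rfl f
  obtain ⟨D, hD, hdom⟩ := hD₀.exists_isDominating hconn
  exact ⟨D, hD.card_le, G.hadwigerNumber_induce_compl_add_one_le hD.1 hdom⟩

/-- If `G` is a finite simple connected graph containing an induced claw `K_{1,3}`,
then there is a vertex set `D` with `|D| ≤ 2 α(G) - 2` such that
`h(G) ≥ h(G - D) + 1`, where `G - D` is the induced subgraph on `V(G) \ D`. -/
theorem exists_deletion_set_of_claw {V : Type*} [Fintype V] [DecidableEq V]
    (G : SimpleGraph V) (hconn : G.Connected)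
    (hclaw : Nonempty (completeBipartiteGraph (Fin 1) (Fin 3) ↪g G)) :
    ∃ D : Finset V, D.card ≤ 2 * G.stabilityNumber - 2 ∧
      (G.induce ((D : Set V)ᶜ)).hadwigerNumber + 1 ≤ G.hadwigerNumber :=
  exists_deletion_set_of_claw_general G hconn hclaw
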